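/- Let E be a field and let a, n be positive integers with gcd(n, a) = 1. Let α be a field automorphism of E such that α^a = id and such that α fixes every element x ∈ E satisfying x^(2n) = 1. If f ∈ E is nonzero and α(f) ≠ f and α(f) ≠ -f, then α(f^n) ≠ f^n and α(f^n) ≠ -f^n. -/

import Mathlib

/-! Put `ζ = α f / f`. If `α (f ^ n) = ± f ^ n` then `ζ ^ (2 * n) = 1`, so `α` fixes `ζ`; iterating
`α f = ζ * f` gives `f = (α ^ a) f = ζ ^ a * f`, hence `ζ ^ a = 1`. As `gcd (2 * n) a` divides `2`,
`ζ = ±1`, i.e. `α f = ± f`. -/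

theorem sq_eq_one_of_pow_two_mul_eq_one_of_coprime {M : Type*} [Monoid M] {ζ : M} {n a : ℕ}
    (hgcd : n.Coprime a) (h2n : ζ ^ (2 * n) = 1) (ha : ζ ^ a = 1) : ζ ^ 2 = 1 := by
  have hζ : ζ ^ (2 * n).gcd a = 1 := pow_gcd_eq_one.mpr ⟨h2n, ha⟩
  rw [Nat.Coprime.gcd_mul_right_cancel 2 hgcd] at hζ
  obtain ⟨c, hc⟩ := Nat.gcd_dvd_left 2 a
  rw [hc, pow_mul, hζ, one_pow]

namespace RingEquiv

variable {R : Type*}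

theorem pow_apply_of_apply_eq_mul [Semiring R] {α : R ≃+* R} {ζ f : R} (hζ : α ζ = ζ)
    (hf : α f = ζ * f) (k : ℕ) : (α ^ k) f = ζ ^ k * f := by
  induction k with
  | zero => simp
  | succ k ih =>
    rw [pow_succ', RingAut.mul_apply, ih, map_mul, map_pow, hζ, hf, pow_succ, mul_assoc]

theorem pow_eq_one_of_apply_eq_mul [Ring R] [IsDomain R] {α : R ≃+* R} {a : ℕ} (hord : α ^ a = 1)
    {ζ f : R} (hζ : α ζ = ζ) (hf : α f = ζ * f) (hf₀ : f ≠ 0) : ζ ^ a = 1 := by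
  have h := pow_apply_of_apply_eq_mul hζ hf a
  rw [hord, RingAut.one_apply] at h
  exact mul_right_cancel₀ hf₀ (h.symm.trans (one_mul f).symm)

theorem apply_eq_or_eq_neg_of_pow_eq {E : Type*} [Field E] {a n : ℕ} (hgcd : n.Coprime a)
    {α : E ≃+* E} (hord : α ^ a = 1) (hfix : ∀ x : E, x ^ (2 * n) = 1 → α x = x) {f : E}
    (hf : f ≠ 0) (hpow : (α f) ^ (2 * n) = f ^ (2 * n)) : α f = f ∨ α f = -f := by
  set ζ := α f / f
  have hαf : α f = ζ * f := (div_mul_cancel₀ (α f) hf).symm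
  have h2n : ζ ^ (2 * n) = 1 := by
    rw [div_pow, hpow, div_self (pow_ne_zero _ hf)]
  have ha : ζ ^ a = 1 := pow_eq_one_of_apply_eq_mul hord (hfix ζ h2n) hαf hf
  rcases sq_eq_one_iff.mp (sq_eq_one_of_pow_two_mul_eq_one_of_coprime hgcd h2n ha) with h | h
  · left; rw [hαf, h, one_mul]
  · right; rw [hαf, h, neg_one_mul]

end RingEquiv

theorem stmt_0_general (E : Type*) [Field E] (a n : ℕ)
    (hgcd : Nat.gcd n a = 1) (α : E ≃+* E) (hord : α ^ a = 1)
    (hfix : ∀ x : E, x ^ (2 * n) = 1 → α x = x)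
    (f : E) (hf : f ≠ 0) (h1 : α f ≠ f) (h2 : α f ≠ -f) :
    α (f ^ n) ≠ f ^ n ∧ α (f ^ n) ≠ -(f ^ n) := by
  have hpm : ¬ (α f) ^ (2 * n) = f ^ (2 * n) := fun h =>
    (RingEquiv.apply_eq_or_eq_neg_of_pow_eq hgcd hord hfix hf h).elim h1 h2
  refine ⟨fun h => hpm ?_, fun h => hpm ?_⟩ <;>
    simp only [mul_comm 2 n, pow_mul, ← map_pow, h, neg_sq]

/-- Let `E` be a field and let `a, n` be positive integers with
`gcd(n, a) = 1`. Let `α` be a field automorphism of `E` such that `α ^ a = id`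
and such that `α` fixes every element `x ∈ E` satisfying `x ^ (2n) = 1`.
If `f ∈ E` is nonzero and `α f ≠ f` and `α f ≠ -f`, then
`α (f ^ n) ≠ f ^ n` and `α (f ^ n) ≠ -(f ^ n)`. -/
theorem stmt_0 (E : Type*) [Field E] (a n : ℕ) (ha : 0 < a) (hn : 0 < n)
    (hgcd : Nat.gcd n a = 1) (α : E ≃+* E) (hord : α ^ a = 1)
    (hfix : ∀ x : E, x ^ (2 * n) = 1 → α x = x)
    (f : E) (hf : f ≠ 0) (h1 : α f ≠ f) (h2 : α f ≠ -f) :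
    α (f ^ n) ≠ f ^ n ∧ α (f ^ n) ≠ -(f ^ n) :=
  stmt_0_general E a n hgcd α hord hfix f hf h1 h2
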